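/- Let (X, 𝒜) be a measurable space, Q a Markov kernel on X, and suppose there exist θ ∈ (0,1), M ∈ ℕ (M ≥ 1) and a probability measure ν such that Q^M(x, A) ≥ θ·ν(A) for every x ∈ X and every A ∈ 𝒜. Then there exists a unique Q-invariant probability measure μ* (i.e. Qμ* = μ*), and for every probability measure μ on X and every n ≥ 1, ‖Q^n μ − μ*‖_TV ≤ C·α^n, where α = (1 − θ)^{1/M} and C = 2(1 − θ)^{-1}. -/

import Mathlib

open MeasureTheory ProbabilityTheory

/-- The `n`-fold action of a kernel `Q` on a measure: `Q^n μ`. In particular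
`kernelIter Q n (Measure.dirac x) A` is the `n`-step transition probability `Qⁿ(x, A)`. -/
noncomputable def kernelIter {X : Type*} [MeasurableSpace X] (Q : Kernel X X)
    (n : ℕ) (μ : Measure X) : Measure X :=
  (fun m : Measure X => m.bind ⇑Q)^[n] μ

/-- The total variation norm `‖μ − ν‖_TV = (μ−ν)⁺(X) + (μ−ν)⁻(X)` of the difference of
two (finite) measures, expressed via the Jordan decomposition of `μ − ν`, whose positive
part is the (truncated) measure difference `μ - ν` and negative part is `ν - μ`. -/
noncomputable def tvDist {X : Type*} [MeasurableSpace X] (μ ν : Measure X) : ENNReal :=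
  (μ - ν) Set.univ + (ν - μ) Set.univ

/-!
The minorization `c • ν ≤ Qᴹ x` splits `Qᴹ ∘ₘ μ` into `(c μ(X)) • ν` plus a residual of mass
`(1 - c) μ(X)`. For probability measures `μ₁, μ₂` the two halves `μ₁ - μ₂` and `μ₂ - μ₁` of the
Jordan decomposition have equal mass, so their `ν`-parts cancel and `Qᴹ` contracts the total
variation distance by the factor `1 - c`. Hence `Qᴹ` has at most one invariant law; since `Q`
commutes with `Qᴹ`, that law is `Q`-invariant as well. An invariant law exists by regeneration:
`∑ₖ c • Rᵏ ν`, with `R` the residual map, is fixed by `Qᴹ`. Writing `n = M ⌊n / M⌋ + r` turns the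
contraction into the geometric rate.
-/

open scoped ENNReal

namespace MeasureTheory.Measure

variable {X : Type*} [MeasurableSpace X]

lemma add_sub_eq_add_sub (μ ν : Measure X) [IsFiniteMeasure μ] [IsFiniteMeasure ν] :
    μ + (ν - μ) = ν + (μ - ν) := by
  rw [← toSignedMeasure_eq_toSignedMeasure_iff, toSignedMeasure_add, toSignedMeasure_add,
    add_comm ν.toSignedMeasure, ← sub_eq_sub_iff_add_eq_add]
  exact sub_toSignedMeasure_eq_toSignedMeasure_sub

lemma sub_apply_univ_comm {μ ν : Measure X} [IsFiniteMeasure μ] [IsFiniteMeasure ν]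
    (h : μ Set.univ = ν Set.univ) : (μ - ν) Set.univ = (ν - μ) Set.univ := by
  have hsum := congrArg (· Set.univ) (add_sub_eq_add_sub μ ν)
  simp only [add_apply, h] at hsum
  exact ((ENNReal.add_right_inj (measure_ne_top ν _)).mp hsum).symm

lemma le_of_add_le_add_right {μ ν ξ : Measure X} [IsFiniteMeasure ξ] (h : μ + ξ ≤ ν + ξ) :
    μ ≤ ν := by
  rw [le_iff] at h ⊢
  intro s hs
  have hs' := h s hs
  simp only [add_apply] at hs'
  exact (ENNReal.add_le_add_iff_right (measure_ne_top ξ s)).mp hs'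

end MeasureTheory.Measure

section TotalVariation

variable {X : Type*} [MeasurableSpace X]

lemma tvDist_le_two (μ ν : Measure X) [IsProbabilityMeasure μ] [IsProbabilityMeasure ν] :
    tvDist μ ν ≤ 2 := by
  calc tvDist μ ν ≤ μ Set.univ + ν Set.univ := add_le_add (Measure.sub_le _) (Measure.sub_le _)
    _ = 2 := by simp [one_add_one_eq_two]

lemma eq_of_tvDist_eq_zero {μ ν : Measure X} [IsFiniteMeasure μ] [IsFiniteMeasure ν]
    (h : tvDist μ ν = 0) : μ = ν := by
  rw [tvDist, add_eq_zero, Measure.measure_univ_eq_zero, Measure.measure_univ_eq_zero] at h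
  simpa [h.1, h.2] using Measure.add_sub_eq_add_sub μ ν

end TotalVariation

lemma ENNReal.tsum_mul_one_sub_pow {c : ℝ≥0∞} (hc0 : c ≠ 0) (hc1 : c ≤ 1) :
    ∑' k : ℕ, c * (1 - c) ^ k = 1 := by
  rw [ENNReal.tsum_mul_left, ENNReal.tsum_geometric, ENNReal.sub_sub_cancel ENNReal.one_ne_top hc1,
    ENNReal.mul_inv_cancel hc0 (hc1.trans_lt ENNReal.one_lt_top).ne]

lemma Real.pow_div_le_inv_mul_rpow_pow {x : ℝ} (hx0 : 0 < x) (hx1 : x ≤ 1) (n M : ℕ) :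
    x ^ (n / M) ≤ x⁻¹ * (x ^ ((1 : ℝ) / M)) ^ n := by
  have hfloor : (n : ℝ) / M - 1 ≤ (n / M : ℕ) := by
    rw [← Nat.floor_div_eq_div (K := ℝ)]
    exact (Nat.sub_one_lt_floor _).le
  calc x ^ (n / M) = x ^ ((n / M : ℕ) : ℝ) := (Real.rpow_natCast _ _).symm
    _ ≤ x ^ ((n : ℝ) / M - 1) := Real.rpow_le_rpow_of_exponent_ge hx0 hx1 hfloor
    _ = x⁻¹ * (x ^ ((1 : ℝ) / M)) ^ n := by
      rw [Real.rpow_sub hx0, Real.rpow_one, ← Real.rpow_natCast, ← Real.rpow_mul hx0.le,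
        one_div_mul_eq_div, div_eq_inv_mul]

namespace ProbabilityTheory.Kernel

open ENNReal

variable {X : Type*} [MeasurableSpace X]

instance isMarkovKernel_pow (κ : Kernel X X) [IsMarkovKernel κ] : ∀ n : ℕ, IsMarkovKernel (κ ^ n)
  | 0 => inferInstanceAs (IsMarkovKernel Kernel.id)
  | n + 1 => by
    have := isMarkovKernel_pow κ n
    rw [pow_succ]
    exact inferInstanceAs (IsMarkovKernel ((κ ^ n) ∘ₖ κ))

@[simp] lemma one_comp (μ : Measure X) : (1 : Kernel X X) ∘ₘ μ = μ :=
  Measure.id_comp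

lemma mul_comp (κ η : Kernel X X) (μ : Measure X) : (κ * η) ∘ₘ μ = κ ∘ₘ (η ∘ₘ μ) :=
  Measure.comp_assoc.symm

lemma pow_comp_eq_self {κ : Kernel X X} {μ : Measure X} (h : κ ∘ₘ μ = μ) (n : ℕ) :
    (κ ^ n) ∘ₘ μ = μ := by
  induction n with
  | zero => exact one_comp μ
  | succ n ih => rw [pow_succ, mul_comp, h, ih]

lemma pow_comp_comp (κ : Kernel X X) (n : ℕ) (μ : Measure X) :
    ⇑(κ ^ n) ∘ₘ (κ ∘ₘ μ) = κ ∘ₘ (⇑(κ ^ n) ∘ₘ μ) := by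
  rw [← mul_comp, ← mul_comp, pow_mul_comm']

noncomputable def residual (P : Kernel X X) (c : ℝ≥0∞) (ν μ : Measure X) : Measure X :=
  P ∘ₘ μ - (c * μ Set.univ) • ν

instance isFiniteMeasure_residual (P : Kernel X X) [IsFiniteKernel P] (c : ℝ≥0∞)
    (ν μ : Measure X) [IsFiniteMeasure μ] : IsFiniteMeasure (residual P c ν μ) :=
  Measure.isFiniteMeasure_sub

instance isFiniteMeasure_iterate_residual (P : Kernel X X) [IsFiniteKernel P] (c : ℝ≥0∞)
    (ν μ : Measure X) [IsFiniteMeasure μ] (k : ℕ) :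
    IsFiniteMeasure ((residual P c ν)^[k] μ) := by
  induction k with
  | zero => assumption
  | succ k ih =>
    rw [Function.iterate_succ_apply']
    infer_instance

variable {P : Kernel X X} {c : ℝ≥0∞} {ν : Measure X}

lemma smul_le_comp (hP : ∀ x, c • ν ≤ P x) (μ : Measure X) :
    (c * μ Set.univ) • ν ≤ P ∘ₘ μ := by
  rw [Measure.le_iff]
  intro A hA
  rw [Measure.smul_apply, smul_eq_mul, Measure.bind_apply hA P.aemeasurable]
  calc c * μ Set.univ * ν A = ∫⁻ _, c * ν A ∂μ := by rw [MeasureTheory.lintegral_const]; ring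
    _ ≤ ∫⁻ x, P x A ∂μ := lintegral_mono fun x => hP x A

variable [IsMarkovKernel P] [IsProbabilityMeasure ν]

lemma le_one_of_forall_smul_le (hP : ∀ x, c • ν ≤ P x) : c ≤ 1 := by
  obtain ⟨x⟩ := nonempty_of_isProbabilityMeasure ν
  simpa using hP x Set.univ

lemma mul_measure_univ_ne_top (hP : ∀ x, c • ν ≤ P x) (μ : Measure X) [IsFiniteMeasure μ] :
    c * μ Set.univ ≠ ∞ :=
  mul_ne_top ((le_one_of_forall_smul_le hP).trans_lt one_lt_top).ne (measure_ne_top _ _)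

lemma isFiniteMeasure_smul (hP : ∀ x, c • ν ≤ P x) (μ : Measure X) [IsFiniteMeasure μ] :
    IsFiniteMeasure ((c * μ Set.univ) • ν) :=
  ⟨by simpa using (mul_measure_univ_ne_top hP μ).lt_top⟩

lemma residual_add_smul (hP : ∀ x, c • ν ≤ P x) (μ : Measure X) [IsFiniteMeasure μ] :
    residual P c ν μ + (c * μ Set.univ) • ν = P ∘ₘ μ := by
  have := isFiniteMeasure_smul hP μ
  exact Measure.sub_add_cancel_of_le (smul_le_comp hP μ)

lemma residual_apply_univ (hP : ∀ x, c • ν ≤ P x) (μ : Measure X) [IsFiniteMeasure μ] :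
    residual P c ν μ Set.univ = (1 - c) * μ Set.univ := by
  have h := congrArg (· Set.univ) (residual_add_smul hP μ)
  simp only [Measure.add_apply, Measure.smul_apply, smul_eq_mul, measure_univ, mul_one,
    Measure.comp_apply_univ] at h
  rw [ENNReal.sub_mul fun _ _ => measure_ne_top μ _, one_mul]
  exact ENNReal.eq_sub_of_add_eq (mul_measure_univ_ne_top hP μ) h

lemma comp_le_residual_sub_add_comp (hP : ∀ x, c • ν ≤ P x) (μ₁ μ₂ : Measure X)
    [IsProbabilityMeasure μ₁] [IsProbabilityMeasure μ₂] :
    P ∘ₘ μ₁ ≤ residual P c ν (μ₁ - μ₂) + P ∘ₘ μ₂ := by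
  have hmass : (μ₂ - μ₁) Set.univ = (μ₁ - μ₂) Set.univ := by
    refine Measure.sub_apply_univ_comm ?_
    simp
  have := isFiniteMeasure_smul hP (μ₁ - μ₂)
  refine Measure.le_of_add_le_add_right (ξ := (c * (μ₁ - μ₂) Set.univ) • ν) ?_
  calc P ∘ₘ μ₁ + (c * (μ₁ - μ₂) Set.univ) • ν ≤ P ∘ₘ μ₁ + P ∘ₘ (μ₂ - μ₁) := by
        gcongr
        exact hmass ▸ smul_le_comp hP _
    _ = P ∘ₘ μ₂ + P ∘ₘ (μ₁ - μ₂) := by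
        rw [← Measure.comp_add, ← Measure.comp_add, Measure.add_sub_eq_add_sub]
    _ = residual P c ν (μ₁ - μ₂) + P ∘ₘ μ₂ + (c * (μ₁ - μ₂) Set.univ) • ν := by
        rw [← residual_add_smul hP (μ₁ - μ₂)]
        abel

lemma tvDist_comp_le (hP : ∀ x, c • ν ≤ P x) (μ₁ μ₂ : Measure X)
    [IsProbabilityMeasure μ₁] [IsProbabilityMeasure μ₂] :
    tvDist (P ∘ₘ μ₁) (P ∘ₘ μ₂) ≤ (1 - c) * tvDist μ₁ μ₂ := by
  have sub_le (μ₁ μ₂ : Measure X) [IsProbabilityMeasure μ₁] [IsProbabilityMeasure μ₂] :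
      (P ∘ₘ μ₁ - P ∘ₘ μ₂) Set.univ ≤ (1 - c) * (μ₁ - μ₂) Set.univ :=
    (Measure.sub_le_of_le_add (comp_le_residual_sub_add_comp hP μ₁ μ₂) _).trans_eq
      (residual_apply_univ hP _)
  rw [tvDist, tvDist, mul_add]
  exact add_le_add (sub_le μ₁ μ₂) (sub_le μ₂ μ₁)

lemma tvDist_pow_comp_le (hP : ∀ x, c • ν ≤ P x) (μ₁ μ₂ : Measure X)
    [IsProbabilityMeasure μ₁] [IsProbabilityMeasure μ₂] (q : ℕ) :
    tvDist (⇑(P ^ q) ∘ₘ μ₁) (⇑(P ^ q) ∘ₘ μ₂) ≤ (1 - c) ^ q * tvDist μ₁ μ₂ := by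
  induction q with
  | zero => simp only [pow_zero, one_comp, one_mul, le_refl]
  | succ q ih =>
    rw [pow_succ' P, mul_comp, mul_comp, pow_succ', mul_assoc]
    exact (tvDist_comp_le hP _ _).trans (by gcongr)

lemma eq_of_comp_eq_self (hP : ∀ x, c • ν ≤ P x) (hc : c ≠ 0) {μ₁ μ₂ : Measure X}
    [IsProbabilityMeasure μ₁] [IsProbabilityMeasure μ₂] (h₁ : P ∘ₘ μ₁ = μ₁)
    (h₂ : P ∘ₘ μ₂ = μ₂) : μ₁ = μ₂ := by
  have hcontr := tvDist_comp_le hP μ₁ μ₂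
  rw [h₁, h₂] at hcontr
  have hfin : tvDist μ₁ μ₂ ≠ ∞ := ((tvDist_le_two μ₁ μ₂).trans_lt ofNat_lt_top).ne
  refine eq_of_tvDist_eq_zero (by_contra fun hne => ?_)
  have hle : 1 ≤ 1 - c := by
    rwa [← ENNReal.mul_le_mul_iff_left hne hfin, one_mul]
  exact (ENNReal.sub_lt_self one_ne_top one_ne_zero hc).not_ge hle

lemma iterate_residual_apply_univ (hP : ∀ x, c • ν ≤ P x) (k : ℕ) :
    ((residual P c ν)^[k] ν) Set.univ = (1 - c) ^ k := by
  induction k with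
  | zero => simp
  | succ k ih => rw [Function.iterate_succ_apply', residual_apply_univ hP, ih, pow_succ']

lemma exists_comp_eq_self (hP : ∀ x, c • ν ≤ P x) (hc : c ≠ 0) :
    ∃ μ : Measure X, IsProbabilityMeasure μ ∧ P ∘ₘ μ = μ := by
  have hgeom := ENNReal.tsum_mul_one_sub_pow hc (le_one_of_forall_smul_le hP)
  have hstep (k : ℕ) : P ∘ₘ (c • (residual P c ν)^[k] ν)
      = c • (residual P c ν)^[k + 1] ν + (c * (c * (1 - c) ^ k)) • ν := by
    rw [Measure.comp_smul, ← residual_add_smul hP, iterate_residual_apply_univ hP, smul_add,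
      smul_smul, Function.iterate_succ_apply']
  refine ⟨Measure.sum fun k => c • (residual P c ν)^[k] ν, ⟨?_⟩, ?_⟩
  · simp only [Measure.sum_apply _ MeasurableSet.univ, Measure.smul_apply, smul_eq_mul,
      iterate_residual_apply_univ hP, hgeom]
  · ext A hA
    rw [Measure.bind_sum _ _ P.aemeasurable, Measure.sum_apply _ hA, Measure.sum_apply _ hA]
    simp only [hstep, Measure.add_apply, Measure.smul_apply, smul_eq_mul]
    rw [ENNReal.tsum_add, ENNReal.tsum_mul_right,
      ENNReal.tsum_mul_left (f := fun k => c * (1 - c) ^ k), hgeom, mul_one,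
      tsum_eq_zero_add' (f := fun k => c * ((residual P c ν)^[k] ν) A) ENNReal.summable,
      Function.iterate_zero_apply, add_comm]

lemma tvDist_pow_comp_le_two_mul {Q : Kernel X X} [IsMarkovKernel Q] {M : ℕ}
    (hP : ∀ x, c • ν ≤ (Q ^ M) x) {μ μstar : Measure X} [IsProbabilityMeasure μ]
    [IsProbabilityMeasure μstar] (hinv : Q ∘ₘ μstar = μstar) (n : ℕ) :
    tvDist (⇑(Q ^ n) ∘ₘ μ) μstar ≤ 2 * (1 - c) ^ (n / M) := by
  have hsplit : Q ^ n = (Q ^ M) ^ (n / M) * Q ^ (n % M) := by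
    rw [← pow_mul, ← _root_.pow_add, Nat.div_add_mod]
  calc tvDist (⇑(Q ^ n) ∘ₘ μ) μstar
      = tvDist (⇑((Q ^ M) ^ (n / M)) ∘ₘ (⇑(Q ^ (n % M)) ∘ₘ μ))
          (⇑((Q ^ M) ^ (n / M)) ∘ₘ (⇑(Q ^ (n % M)) ∘ₘ μstar)) := by
        rw [hsplit, mul_comp, pow_comp_eq_self hinv, pow_comp_eq_self (pow_comp_eq_self hinv M)]
    _ ≤ (1 - c) ^ (n / M) * 2 :=
        (tvDist_pow_comp_le hP _ _ _).trans (by gcongr; exact tvDist_le_two _ _)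
    _ = 2 * (1 - c) ^ (n / M) := mul_comm _ _

end ProbabilityTheory.Kernel

lemma kernelIter_eq_pow_comp {X : Type*} [MeasurableSpace X] (Q : Kernel X X) (n : ℕ)
    (μ : Measure X) : kernelIter Q n μ = (Q ^ n) ∘ₘ μ := by
  induction n with
  | zero => exact (Kernel.one_comp μ).symm
  | succ n ih =>
    unfold kernelIter at ih ⊢
    rw [Function.iterate_succ_apply', ih, pow_succ', Kernel.mul_comp]

theorem doeblin_theorem
    {X : Type*} [MeasurableSpace X]
    (Q : Kernel X X) [IsMarkovKernel Q]
    (θ : ℝ) (hθ : θ ∈ Set.Ioo (0:ℝ) 1)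
    (M : ℕ)
    (ν : Measure X) [IsProbabilityMeasure ν]
    (hmin : ∀ x : X, ∀ A : Set X, MeasurableSet A →
      ENNReal.ofReal θ * ν A ≤ kernelIter Q M (Measure.dirac x) A) :
    ∃ μstar : Measure X,
      (IsProbabilityMeasure μstar ∧ μstar.bind ⇑Q = μstar) ∧
      (∀ μ' : Measure X, IsProbabilityMeasure μ' → μ'.bind ⇑Q = μ' → μ' = μstar) ∧
      (∀ μ : Measure X, IsProbabilityMeasure μ → ∀ n : ℕ, 1 ≤ n →
        tvDist (kernelIter Q n μ) μstar
          ≤ ENNReal.ofReal (2 * (1 - θ)⁻¹ * ((1 - θ) ^ ((1:ℝ) / M)) ^ n)) := by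
  have hP : ∀ x, ENNReal.ofReal θ • ν ≤ (Q ^ M) x := fun x => Measure.le_iff.mpr fun A hA => by
    simpa [kernelIter_eq_pow_comp, Measure.dirac_bind (Kernel.measurable _)] using hmin x A hA
  have hc : ENNReal.ofReal θ ≠ 0 := (ENNReal.ofReal_pos.mpr hθ.1).ne'
  obtain ⟨μstar, hprob, hfix⟩ := Kernel.exists_comp_eq_self hP hc
  have hinv : Q ∘ₘ μstar = μstar :=
    Kernel.eq_of_comp_eq_self hP hc (by rw [Kernel.pow_comp_comp, hfix]) hfix
  refine ⟨μstar, ⟨hprob, hinv⟩,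
    fun μ' _ h => Kernel.eq_of_comp_eq_self hP hc (Kernel.pow_comp_eq_self h M) hfix,
    fun μ _ n _ => ?_⟩
  have hθ' : 0 < 1 - θ := sub_pos.mpr hθ.2
  calc tvDist (kernelIter Q n μ) μstar ≤ 2 * (1 - ENNReal.ofReal θ) ^ (n / M) := by
        rw [kernelIter_eq_pow_comp]
        exact Kernel.tvDist_pow_comp_le_two_mul hP hinv n
    _ = ENNReal.ofReal (2 * (1 - θ) ^ (n / M)) := by
        rw [ENNReal.ofReal_mul zero_le_two, ENNReal.ofReal_pow hθ'.le,
          ENNReal.ofReal_sub _ hθ.1.le, ENNReal.ofReal_one, ENNReal.ofReal_ofNat]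
    _ ≤ ENNReal.ofReal (2 * (1 - θ)⁻¹ * ((1 - θ) ^ ((1:ℝ) / M)) ^ n) := by
        rw [mul_assoc]
        gcongr
        exact Real.pow_div_le_inv_mul_rpow_pow hθ' (by linarith [hθ.1]) n M
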